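/- arXiv:1805.11021 — 2 statements merged into one kernel-verified Lean document; each statement's English description precedes it below -/
import Mathlib

section
/- There is a one-to-one correspondence between time warps p : ω+1 → ω+1 and downward-closed, monotone-in-the-second-argument relations (linear systems) R ⊆ ω × ω satisfying appropriate cocontinuity, given by (m, n) ∈ R iff y(m) ≤ p(y(n)), where y : ω → ω+1 is the embedding of positive naturals. In particular, for time warps p and q, p ≤ q pointwise if and only if for all positive naturals m, n: m ≤ p(n) implies m ≤ q(n). -/
def IsTimeWarp (p : ℕ∞ → ℕ∞) : Prop :=
  ∀ S : Set ℕ∞, p (sSup S) = sSup (p '' S)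

theorem ENat.le_of_forall_pos_natCast_le {a b : ℕ∞}
    (h : ∀ m : ℕ, 1 ≤ m → (m : ℕ∞) ≤ a → (m : ℕ∞) ≤ b) : a ≤ b :=
  ENat.forall_natCast_le_iff_le.mp fun m hm =>
    m.eq_zero_or_pos.elim (fun hm₀ => by simp [hm₀]) (fun hm₁ => h m hm₁ hm)

namespace IsTimeWarp

variable {p : ℕ∞ → ℕ∞}

theorem monotone (hp : IsTimeWarp p) : Monotone p := by
  intro a b hab
  have hpair := hp {a, b}
  rw [sSup_pair, sup_of_le_right hab, Set.image_pair, sSup_pair] at hpair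
  exact hpair ▸ le_sup_left

theorem map_zero (hp : IsTimeWarp p) : p 0 = 0 := by
  simpa using hp ∅

theorem map_iSup (hp : IsTimeWarp p) {ι : Sort*} (f : ι → ℕ∞) :
    p (⨆ i, f i) = ⨆ i, p (f i) := by
  rw [iSup, hp, ← Set.range_comp, iSup]
  rfl

theorem map_top (hp : IsTimeWarp p) : p ⊤ = ⨆ n : ℕ, p n := by
  rw [← ENat.iSup_natCast, hp.map_iSup]

theorem le_of_forall_natCast_le (hp : IsTimeWarp p) {q : ℕ∞ → ℕ∞} (hq : Monotone q)
    (h : ∀ k : ℕ, p k ≤ q k) : p ≤ q := by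
  intro n
  induction n using ENat.recTopCoe with
  | top => exact hp.map_top ▸ iSup_le fun k => (h k).trans (hq le_top)
  | coe k => exact h k

end IsTimeWarp

/-- Time warps correspond to linear systems: for time warps `p` and `q`,
`p ≤ q` holds pointwise iff for all positive naturals `m, n`,
`m ≤ p n` implies `m ≤ q n`. -/
theorem le_iff_linear_system (p q : ℕ∞ → ℕ∞)
    (hp : IsTimeWarp p) (hq : IsTimeWarp q) :
    (∀ n, p n ≤ q n) ↔
      (∀ m n : ℕ, 1 ≤ m → 1 ≤ n → (m : ℕ∞) ≤ p n → (m : ℕ∞) ≤ q n) := by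
  refine ⟨fun h m n _ _ hm => hm.trans (h n), fun h => hp.le_of_forall_natCast_le hq.monotone ?_⟩
  rintro (_ | k)
  · simp [hp.map_zero]
  · exact ENat.le_of_forall_pos_natCast_le fun m hm => h m (k + 1) hm k.succ_pos
end

section
/- The pointwise infimum and pointwise supremum of two time warps are again time warps; hence time warps form a lattice under the pointwise order. -/
lemma isTimeWarp_mono {p : ℕ∞ → ℕ∞} (hp : IsTimeWarp p) : Monotone p := by
  intro a b hab
  have h := hp {a, b}
  rw [Set.image_pair, sSup_pair, sSup_pair, sup_eq_right.mpr hab] at h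
  rw [h]
  exact le_sup_left

lemma isTimeWarp_inf {p q : ℕ∞ → ℕ∞} (hp : IsTimeWarp p) (hq : IsTimeWarp q) :
    IsTimeWarp (fun n => p n ⊓ q n) := by
  intro S
  simp only
  rw [hp, hq]
  apply le_antisymm
  · by_contra h
    push_neg at h
    have h1 : sSup ((fun n => p n ⊓ q n) '' S) < sSup (p '' S) := lt_of_lt_of_le h inf_le_left
    have h2 : sSup ((fun n => p n ⊓ q n) '' S) < sSup (q '' S) := lt_of_lt_of_le h inf_le_right
    obtain ⟨b, ⟨x, hx, rfl⟩, hbx⟩ := lt_sSup_iff.mp h1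
    obtain ⟨c, ⟨y, hy, rfl⟩, hcy⟩ := lt_sSup_iff.mp h2
    rcases le_total x y with hxy | hxy
    · have : p y ⊓ q y ≤ sSup ((fun n => p n ⊓ q n) '' S) := le_sSup ⟨y, hy, rfl⟩
      have hlt : sSup ((fun n => p n ⊓ q n) '' S) < p y ⊓ q y :=
        lt_inf_iff.mpr ⟨lt_of_lt_of_le hbx (isTimeWarp_mono hp hxy), hcy⟩
      exact absurd this (not_le_of_gt hlt)
    · have : p x ⊓ q x ≤ sSup ((fun n => p n ⊓ q n) '' S) := le_sSup ⟨x, hx, rfl⟩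
      have hlt : sSup ((fun n => p n ⊓ q n) '' S) < p x ⊓ q x :=
        lt_inf_iff.mpr ⟨hbx, lt_of_lt_of_le hcy (isTimeWarp_mono hq hxy)⟩
      exact absurd this (not_le_of_gt hlt)
  · apply sSup_le
    rintro b ⟨x, hx, rfl⟩
    exact le_inf (le_trans inf_le_left (le_sSup ⟨x, hx, rfl⟩))
      (le_trans inf_le_right (le_sSup ⟨x, hx, rfl⟩))

lemma isTimeWarp_sup {p q : ℕ∞ → ℕ∞} (hp : IsTimeWarp p) (hq : IsTimeWarp q) :
    IsTimeWarp (fun n => p n ⊔ q n) := by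
  intro S
  simp only
  rw [hp, hq]
  apply le_antisymm
  · refine sup_le (sSup_le ?_) (sSup_le ?_) <;> rintro b ⟨x, hx, rfl⟩
    · exact le_trans le_sup_left (le_sSup ⟨x, hx, rfl⟩)
    · exact le_trans le_sup_right (le_sSup ⟨x, hx, rfl⟩)
  · apply sSup_le
    rintro b ⟨x, hx, rfl⟩
    exact sup_le_sup (le_sSup ⟨x, hx, rfl⟩) (le_sSup ⟨x, hx, rfl⟩)

/-- The pointwise infimum and supremum of two time warps are again time warps,
and they are respectively the greatest lower bound and least upper bound among
time warps; hence time warps form a lattice under the pointwise order. -/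
theorem timeWarp_lattice (p q : ℕ∞ → ℕ∞) (hp : IsTimeWarp p) (hq : IsTimeWarp q) :
    IsTimeWarp (fun n => p n ⊓ q n) ∧
    IsTimeWarp (fun n => p n ⊔ q n) ∧
    (∀ n, p n ⊓ q n ≤ p n) ∧ (∀ n, p n ⊓ q n ≤ q n) ∧
    (∀ r : ℕ∞ → ℕ∞, IsTimeWarp r →
      (∀ n, r n ≤ p n) → (∀ n, r n ≤ q n) → ∀ n, r n ≤ p n ⊓ q n) ∧
    (∀ n, p n ≤ p n ⊔ q n) ∧ (∀ n, q n ≤ p n ⊔ q n) ∧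
    (∀ r : ℕ∞ → ℕ∞, IsTimeWarp r →
      (∀ n, p n ≤ r n) → (∀ n, q n ≤ r n) → ∀ n, p n ⊔ q n ≤ r n) := by
  refine ⟨isTimeWarp_inf hp hq, isTimeWarp_sup hp hq,
    fun n => inf_le_left, fun n => inf_le_right,
    fun r _ h1 h2 n => le_inf (h1 n) (h2 n),
    fun n => le_sup_left, fun n => le_sup_right,
    fun r _ h1 h2 n => sup_le (h1 n) (h2 n)⟩
end
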